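/- arXiv:0910.2102 — 2 statements merged into one kernel-verified Lean document; each statement's English description precedes it below -/
import Mathlib

section
/- For all sufficiently large natural numbers m, the sum over primes p dividing m of (log p)/(p^{1/4} - 1) is at most (1/2) log m. -/
/-!
For p ≥ 625 we have p^{1/4} - 1 ≥ 4, so those primes contribute at most
(1/4) ∑_{p ∣ m} log p ≤ (1/4) log m. The primes below 625 contribute at most a fixed
constant C, which is at most (1/4) log m as soon as log m ≥ 4C.
-/

open Finset Real

lemma Nat.sum_log_primeFactors_le (m : ℕ) :
    ∑ p ∈ m.primeFactors, Real.log p ≤ Real.log m := by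
  rcases m.eq_zero_or_pos with rfl | hm
  · simp
  have hprod : ((∏ p ∈ m.primeFactors, p : ℕ) : ℝ) ≤ m :=
    mod_cast Nat.le_of_dvd hm m.prod_primeFactors_dvd
  push_cast at hprod
  rw [← log_prod fun p hp => mod_cast (Nat.prime_of_mem_primeFactors hp).ne_zero]
  exact log_le_log (prod_pos fun p hp => mod_cast (Nat.prime_of_mem_primeFactors hp).pos) hprod

lemma Real.log_div_rpow_quarter_sub_one_nonneg {x : ℝ} (hx : 1 ≤ x) :
    0 ≤ log x / (x ^ (1 / 4 : ℝ) - 1) :=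
  div_nonneg (log_nonneg hx) (sub_nonneg.2 (one_le_rpow hx (by norm_num)))

lemma Real.log_div_rpow_quarter_sub_one_le {x : ℝ} (hx : 625 ≤ x) :
    log x / (x ^ (1 / 4 : ℝ) - 1) ≤ log x / 4 := by
  have hroot : (5 : ℝ) ≤ x ^ (1 / 4 : ℝ) := by
    calc (5 : ℝ) = (625 : ℝ) ^ (1 / 4 : ℝ) := by
          rw [show (625 : ℝ) = 5 ^ (4 : ℝ) by norm_num, ← rpow_mul (by norm_num)]; norm_num
      _ ≤ x ^ (1 / 4 : ℝ) := rpow_le_rpow (by norm_num) hx (by norm_num)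
  exact div_le_div_of_nonneg_left (log_nonneg (by linarith)) (by norm_num) (by linarith)

theorem sum_log_div_pow_quarter_le :
    ∃ N : ℕ, ∀ m : ℕ, N ≤ m →
      ∑ p ∈ m.primeFactors, Real.log p / ((p : ℝ) ^ ((1 : ℝ) / 4) - 1)
        ≤ (1 / 2) * Real.log m := by
  set f : ℕ → ℝ := fun p => log p / ((p : ℝ) ^ ((1 : ℝ) / 4) - 1)
  set C := ∑ p ∈ Nat.primesBelow 625, f p
  obtain ⟨N, hN⟩ := Filter.eventually_atTop.mp <|
    (tendsto_log_atTop.comp tendsto_natCast_atTop_atTop).eventually_ge_atTop (4 * C)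
  refine ⟨N, fun m hm => ?_⟩
  have hlog : 4 * C ≤ log m := hN m hm
  have hsmall : ∑ p ∈ m.primeFactors with p < 625, f p ≤ C := by
    refine sum_le_sum_of_subset_of_nonneg (fun p hp => ?_) fun p hp _ =>
      log_div_rpow_quarter_sub_one_nonneg (mod_cast (Nat.prime_of_mem_primesBelow hp).one_le)
    simp only [mem_filter, Nat.mem_primeFactors] at hp
    exact Nat.mem_primesBelow.2 ⟨hp.2, hp.1.1⟩
  have hlarge : ∑ p ∈ m.primeFactors with ¬p < 625, f p ≤ log m / 4 :=
    calc ∑ p ∈ m.primeFactors with ¬p < 625, f p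
        ≤ ∑ p ∈ m.primeFactors with ¬p < 625, log p / 4 :=
          sum_le_sum fun p hp => log_div_rpow_quarter_sub_one_le
            (mod_cast not_lt.1 (mem_filter.1 hp).2)
      _ ≤ ∑ p ∈ m.primeFactors, log p / 4 :=
          sum_le_sum_of_subset_of_nonneg (filter_subset _ _) fun p hp _ =>
            div_nonneg (log_natCast_nonneg p) (by norm_num)
      _ ≤ log m / 4 := by
          rw [← sum_div]; exact div_le_div_of_nonneg_right m.sum_log_primeFactors_le (by norm_num)
  rw [← sum_filter_add_sum_filter_not m.primeFactors (· < 625)]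
  linarith
end

section
/- Let χ be a Dirichlet character modulo q induced by the primitive character ψ of conductor q₁, and write q₂ for the product of primes dividing q but not q₁. For 1/2 ≤ σ ≤ 3/4 and real t, the ratio ρ = Π_{p | q, p ∤ q₁} |1 - χ₁(p) p^{-σ-it}| / |1 - χ₁(p) p^{σ-1-it}| (with χ₁ = ψ) satisfies log ρ ≤ (2σ-1) Σ_{p | q, p ∤ q₁} (log p)/(p^{1-σ} - 1). -/
/-!
Put `w = z p^{σ-1-it}` and `c = p^{1-2σ} ∈ (0, 1]`, so that the numerator is `|1 - c w|`. Since
`1 - c w = (1 - w) + (1 - c) w` and `|1 - w| ≥ 1 - p^{σ-1}`, each factor of `ρ` is at most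
`1 + (1 - c) / (p^{1-σ} - 1)`. Finally `log (1 + y) ≤ y` and `1 - p^{-(2σ-1)} ≤ (2σ-1) log p`.
-/

open Complex Finset

lemma norm_one_sub_ofReal_mul_le (w : ℂ) {c : ℝ} (hc : c ≤ 1) :
    ‖1 - c * w‖ ≤ ‖1 - w‖ + (1 - c) * ‖w‖ := by
  have hsplit : 1 - c * w = (1 - w) + ((1 - c : ℝ) : ℂ) * w := by push_cast; ring
  calc ‖1 - c * w‖ ≤ ‖1 - w‖ + ‖((1 - c : ℝ) : ℂ) * w‖ := hsplit ▸ norm_add_le _ _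
    _ = ‖1 - w‖ + (1 - c) * ‖w‖ := by
      rw [norm_mul, norm_real, Real.norm_of_nonneg (sub_nonneg.2 hc)]

lemma norm_one_sub_ofReal_mul_div_le {w : ℂ} {c P : ℝ} (hc : c ≤ 1) (hP : 1 < P)
    (hw : ‖w‖ ≤ P⁻¹) :
    ‖1 - c * w‖ / ‖1 - w‖ ≤ 1 + (1 - c) / (P - 1) := by
  have hPinv : P⁻¹ < 1 := inv_lt_one_of_one_lt₀ hP
  have hden : 1 - P⁻¹ ≤ ‖1 - w‖ := by
    have := norm_sub_norm_le (1 : ℂ) w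
    rw [norm_one] at this
    linarith
  have hB : ‖1 - w‖ ≠ 0 := by linarith
  calc ‖1 - c * w‖ / ‖1 - w‖ ≤ (‖1 - w‖ + (1 - c) * P⁻¹) / ‖1 - w‖ := by
        gcongr
        refine (norm_one_sub_ofReal_mul_le w hc).trans ?_
        gcongr
    _ = 1 + (1 - c) * P⁻¹ / ‖1 - w‖ := by rw [add_div, div_self hB]
    _ ≤ 1 + (1 - c) * P⁻¹ / (1 - P⁻¹) := by gcongr
    _ = 1 + (1 - c) / (P - 1) := by field_simp

lemma one_sub_rpow_neg_le {x : ℝ} (hx : 0 < x) (u : ℝ) : 1 - x ^ (-u) ≤ u * Real.log x := by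
  rw [Real.rpow_def_of_pos hx, mul_neg, mul_comm]
  linarith [Real.add_one_le_exp (-(u * Real.log x))]

lemma norm_mul_cpow_lt_one {x : ℝ} (hx : 1 < x) {z : ℂ} (hz : ‖z‖ ≤ 1) {s : ℂ}
    (hs : s.re < 0) : ‖z * (x : ℂ) ^ s‖ < 1 := by
  rw [norm_mul, norm_cpow_eq_rpow_re_of_pos (by linarith)]
  calc ‖z‖ * x ^ s.re ≤ 1 * x ^ s.re := by gcongr
    _ < 1 := by rw [one_mul]; exact Real.rpow_lt_one_of_one_lt_of_neg hx hs

lemma norm_one_sub_mul_cpow_pos {x : ℝ} (hx : 1 < x) {z : ℂ} (hz : ‖z‖ ≤ 1) {s : ℂ}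
    (hs : s.re < 0) : 0 < ‖1 - z * (x : ℂ) ^ s‖ := by
  have := norm_sub_norm_le (1 : ℂ) (z * (x : ℂ) ^ s)
  rw [norm_one] at this
  linarith [norm_mul_cpow_lt_one hx hz hs]

lemma norm_one_sub_mul_cpow_div_pos {x : ℝ} (hx : 1 < x) {z : ℂ} (hz : ‖z‖ ≤ 1) {s s' : ℂ}
    (hs : s.re < 0) (hs' : s'.re < 0) :
    0 < ‖1 - z * (x : ℂ) ^ s‖ / ‖1 - z * (x : ℂ) ^ s'‖ :=
  div_pos (norm_one_sub_mul_cpow_pos hx hz hs) (norm_one_sub_mul_cpow_pos hx hz hs')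

lemma log_norm_one_sub_mul_cpow_div_le {x : ℝ} (hx : 1 < x) {z : ℂ} (hz : ‖z‖ ≤ 1)
    {σ : ℝ} (hσ1 : 1 / 2 ≤ σ) (hσ2 : σ < 1) (t : ℝ) :
    Real.log (‖1 - z * (x : ℂ) ^ (-(σ : ℂ) - t * I)‖ /
        ‖1 - z * (x : ℂ) ^ ((σ : ℂ) - 1 - t * I)‖)
      ≤ (2 * σ - 1) * (Real.log x / (x ^ (1 - σ) - 1)) := by
  have hx0 : 0 < x := by linarith
  set w := z * (x : ℂ) ^ ((σ : ℂ) - 1 - t * I)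
  set c := x ^ (1 - 2 * σ)
  set P := x ^ (1 - σ)
  have hP : 1 < P := Real.one_lt_rpow hx (by linarith)
  have hw : ‖w‖ ≤ P⁻¹ := by
    rw [norm_mul, norm_cpow_eq_rpow_re_of_pos hx0, ← Real.rpow_neg hx0.le]
    simpa using mul_le_of_le_one_left (by positivity) hz
  have hnum : z * (x : ℂ) ^ (-(σ : ℂ) - t * I) = c * w := by
    rw [show -(σ : ℂ) - t * I = ((1 - 2 * σ : ℝ) : ℂ) + ((σ : ℂ) - 1 - t * I) by push_cast; ring,
      cpow_add _ _ (by exact_mod_cast hx0.ne'), ofReal_cpow hx0.le]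
    ring
  have hratio := norm_one_sub_ofReal_mul_div_le (c := c)
    (Real.rpow_le_one_of_one_le_of_nonpos hx.le (by linarith)) hP hw
  rw [← hnum] at hratio
  have hpos : 0 < ‖1 - z * (x : ℂ) ^ (-(σ : ℂ) - t * I)‖ / ‖1 - w‖ :=
    norm_one_sub_mul_cpow_div_pos hx hz (by simp; linarith) (by simp; linarith)
  have hc : 1 - c ≤ (2 * σ - 1) * Real.log x := by
    simpa [c, neg_sub] using one_sub_rpow_neg_le hx0 (2 * σ - 1)
  calc _ ≤ _ - 1 := Real.log_le_sub_one_of_pos hpos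
    _ ≤ (1 - c) / (P - 1) := by linarith
    _ ≤ (2 * σ - 1) * Real.log x / (P - 1) := by gcongr
    _ = _ := by ring

theorem log_rho_bound_general (q q₁ : ℕ)
    (ψ : DirichletCharacter ℂ q₁)
    (σ t : ℝ) (hσ1 : 1 / 2 ≤ σ) (hσ2 : σ ≤ 3 / 4) :
    Real.log (∏ p ∈ q.primeFactors \ q₁.primeFactors,
        ‖(1 - ψ (p : ZMod q₁) * (p : ℂ) ^ (-(σ : ℂ) - t * Complex.I))‖ /
          ‖(1 - ψ (p : ZMod q₁) * (p : ℂ) ^ ((σ : ℂ) - 1 - t * Complex.I))‖)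
      ≤ (2 * σ - 1) *
        ∑ p ∈ q.primeFactors \ q₁.primeFactors,
          Real.log p / ((p : ℝ) ^ (1 - σ) - 1) := by
  have hp : ∀ p ∈ q.primeFactors \ q₁.primeFactors, 1 < (p : ℝ) := fun p hp ↦ by
    exact_mod_cast (Nat.prime_of_mem_primeFactors (mem_sdiff.1 hp).1).one_lt
  have hψ : ∀ p : ℕ, ‖ψ p‖ ≤ 1 := fun p ↦ ψ.norm_le_one _
  rw [Real.log_prod fun p hps ↦ by
    simp_rw [← ofReal_natCast]
    exact (norm_one_sub_mul_cpow_div_pos (hp p hps) (hψ p) (by simp; linarith)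
      (by simp; linarith)).ne', mul_sum]
  refine sum_le_sum fun p hps ↦ ?_
  simp_rw [← ofReal_natCast]
  exact log_norm_one_sub_mul_cpow_div_le (hp p hps) (hψ p) hσ1 (by linarith) t

theorem log_rho_bound (q q₁ : ℕ) (hq₁ : q₁ ∣ q)
    (ψ : DirichletCharacter ℂ q₁) (hψ : ψ.IsPrimitive)
    (σ t : ℝ) (hσ1 : 1 / 2 ≤ σ) (hσ2 : σ ≤ 3 / 4) :
    Real.log (∏ p ∈ q.primeFactors \ q₁.primeFactors,
        ‖(1 - ψ (p : ZMod q₁) * (p : ℂ) ^ (-(σ : ℂ) - t * Complex.I))‖ /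
          ‖(1 - ψ (p : ZMod q₁) * (p : ℂ) ^ ((σ : ℂ) - 1 - t * Complex.I))‖)
      ≤ (2 * σ - 1) *
        ∑ p ∈ q.primeFactors \ q₁.primeFactors,
          Real.log p / ((p : ℝ) ^ (1 - σ) - 1) :=
  log_rho_bound_general q q₁ ψ σ t hσ1 hσ2
end
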